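/- Let (Y,ρ) be the compact metric space built from a fixed n-point metric space (X,d) of diameter 1 and minimal distance δ, with Ψ·δ > 1 and ρ defined on X^ℕ via first-disagreement coordinates scaled by n^{−(k−1)/α}, α = log_Ψ n. Let P be a hereditary, dilation-invariant metric property, and suppose the largest subset of X having property P has cardinality m ∈ {1,…,n−1}. Then every subset Z ⊆ Y having property P satisfies dim_H(Z,ρ) ≤ log_Ψ m. -/

import Mathlib

/-!
For points of `Z` sharing a prefix of length `k`, the map sending such a point to its `k`-th
coordinate multiplies distances by `Ψ ^ k`; so the set of these coordinates is isometric to a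
dilation of a subset of `Z`, has property `P`, and has at most `m` elements. Hence `Z` meets at
most `m ^ k` cylinders of depth `k`, each of diameter at most `Ψ ^ (-k)`, and for
`d > log m / log Ψ` the bound `m ^ k Ψ ^ (-k d) → 0` on the `d`-dimensional sums gives
`μH[d] Z = 0`.
-/

open scoped Classical

universe u

/-- The self-similar distance on `X^ℕ`: for `x ≠ y`, with `m` the first differing
coordinate (the paper's `k = m+1`), `ρ(x,y) = d(x_m, y_m) / n^(m/α)`. -/
noncomputable def selfSimDist {X : Type u} [MetricSpace X] (n : ℕ) (α : ℝ)
    (x y : ℕ → X) : ℝ :=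
  if h : x = y then 0
  else
    dist (x (Nat.find (Function.ne_iff.mp h))) (y (Nat.find (Function.ne_iff.mp h))) /
      (n : ℝ) ^ ((Nat.find (Function.ne_iff.mp h) : ℝ) / α)

open MeasureTheory Metric Finset

theorem natCast_lt_rpow_of_log_div_log_lt {m : ℕ} {Ψ d : ℝ} (hΨ : 1 < Ψ)
    (hd : Real.log m / Real.log Ψ < d) : (m : ℝ) < Ψ ^ d := by
  rcases Nat.eq_zero_or_pos m with rfl | hm
  · simpa using Real.rpow_pos_of_pos (zero_lt_one.trans hΨ) d
  · rw [Real.lt_rpow_iff_log_lt (by exact_mod_cast hm) (zero_lt_one.trans hΨ),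
      ← div_lt_iff₀ (Real.log_pos hΨ)]
    exact hd

theorem natCast_rpow_div_log_div_log {n : ℕ} {Ψ : ℝ} (hn : 1 < n) (hΨ : 0 < Ψ) (k : ℕ) :
    (n : ℝ) ^ ((k : ℝ) / (Real.log n / Real.log Ψ)) = Ψ ^ k := by
  have hlogn : Real.log n ≠ 0 := (Real.log_pos (by exact_mod_cast hn)).ne'
  rw [Real.rpow_def_of_pos (by positivity), ← Real.exp_log (pow_pos hΨ k), Real.log_pow]
  congr 1
  field_simp

section HausdorffCover

variable {Y : Type*} [EMetricSpace Y] {s : Set Y} {Ψ : ℝ} {m : ℕ} {ι : ℕ → Type*}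
  [∀ k, Fintype (ι k)] {t : ∀ k, ι k → Set Y}

theorem sum_ediam_rpow_le_of_card_le {d : ℝ} (hΨ : 0 < Ψ) (hd : 0 ≤ d)
    (hcard : ∀ k, Fintype.card (ι k) ≤ m ^ k)
    (hdiam : ∀ k i, ediam (t k i) ≤ ENNReal.ofReal (Ψ ^ k)⁻¹) (k : ℕ) :
    ∑ i, ediam (t k i) ^ d ≤ ENNReal.ofReal (m / Ψ ^ d) ^ k := by
  have hterm : ∀ i, ediam (t k i) ^ d ≤ ENNReal.ofReal (Ψ ^ d)⁻¹ ^ k := fun i => calc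
    ediam (t k i) ^ d ≤ ENNReal.ofReal (Ψ ^ k)⁻¹ ^ d := ENNReal.rpow_le_rpow (hdiam k i) hd
    _ = ENNReal.ofReal (Ψ ^ d)⁻¹ ^ k := by
      rw [ENNReal.ofReal_rpow_of_nonneg (by positivity) hd, ← ENNReal.ofReal_pow (by positivity),
        Real.inv_rpow (by positivity), inv_pow, ← Real.rpow_natCast_mul hΨ.le,
        ← Real.rpow_mul_natCast hΨ.le, mul_comm]
  calc ∑ i, ediam (t k i) ^ d ≤ ∑ _i : ι k, ENNReal.ofReal (Ψ ^ d)⁻¹ ^ k :=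
        Finset.sum_le_sum fun i _ => hterm i
    _ = Fintype.card (ι k) * ENNReal.ofReal (Ψ ^ d)⁻¹ ^ k := by
        rw [Finset.sum_const, nsmul_eq_mul, Finset.card_univ]
    _ ≤ (m ^ k : ℕ) * ENNReal.ofReal (Ψ ^ d)⁻¹ ^ k := by gcongr; exact hcard k
    _ = ENNReal.ofReal (m / Ψ ^ d) ^ k := by
        rw [div_eq_mul_inv, ENNReal.ofReal_mul (by positivity), mul_pow, Nat.cast_pow,
          ENNReal.ofReal_natCast]

theorem hausdorffMeasure_eq_zero_of_card_cover_le [MeasurableSpace Y] [BorelSpace Y] {d : ℝ}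
    (hΨ : 1 < Ψ) (hd : 0 ≤ d) (hmd : (m : ℝ) < Ψ ^ d)
    (hcard : ∀ k, Fintype.card (ι k) ≤ m ^ k)
    (hdiam : ∀ k i, ediam (t k i) ≤ ENNReal.ofReal (Ψ ^ k)⁻¹)
    (hcover : ∀ k, s ⊆ ⋃ i, t k i) : μH[d] s = 0 := by
  have hΨ0 : 0 < Ψ := zero_lt_one.trans hΨ
  have hscale : Filter.Tendsto (fun k : ℕ => ENNReal.ofReal (Ψ ^ k)⁻¹) Filter.atTop (nhds 0) := by
    simpa [Function.comp_def, ← inv_pow] using (ENNReal.continuous_ofReal.tendsto 0).comp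
      (tendsto_pow_atTop_nhds_zero_of_lt_one (inv_nonneg.2 hΨ0.le) (inv_lt_one_of_one_lt₀ hΨ))
  have hratio : ENNReal.ofReal (m / Ψ ^ d) < 1 := by
    rw [ENNReal.ofReal_lt_one, div_lt_one (by positivity)]
    exact hmd
  refine le_antisymm ?_ zero_le
  calc μH[d] s ≤ Filter.liminf (fun k => ∑ i, ediam (t k i) ^ d) Filter.atTop :=
        Measure.hausdorffMeasure_le_liminf_sum d s _ hscale t
          (Filter.Eventually.of_forall hdiam) (Filter.Eventually.of_forall hcover)
    _ ≤ Filter.liminf (fun k => ENNReal.ofReal (m / Ψ ^ d) ^ k) Filter.atTop :=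
        Filter.liminf_le_liminf (Filter.Eventually.of_forall
          (sum_ediam_rpow_le_of_card_le hΨ0 hd hcard hdiam))
    _ = 0 := (ENNReal.tendsto_pow_atTop_nhds_zero_of_lt_one hratio).liminf_eq

theorem dimH_le_of_card_cover_le (hΨ : 1 < Ψ) (hcard : ∀ k, Fintype.card (ι k) ≤ m ^ k)
    (hdiam : ∀ k i, ediam (t k i) ≤ ENNReal.ofReal (Ψ ^ k)⁻¹)
    (hcover : ∀ k, s ⊆ ⋃ i, t k i) :
    dimH s ≤ ENNReal.ofReal (Real.log m / Real.log Ψ) := by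
  borelize Y
  refine dimH_le fun d hd => ?_
  by_contra! hlt
  have hmd : (m : ℝ) < Ψ ^ (d : ℝ) := natCast_lt_rpow_of_log_div_log_lt hΨ <| by
    rwa [← ENNReal.ofReal_coe_nnreal, ENNReal.ofReal_lt_ofReal_iff_of_nonneg] at hlt
    exact div_nonneg (Real.log_natCast_nonneg m) (Real.log_pos hΨ).le
  rw [hausdorffMeasure_eq_zero_of_card_cover_le hΨ d.coe_nonneg hmd hcard hdiam hcover] at hd
  exact ENNReal.zero_ne_top hd

end HausdorffCover

section SelfSimDist

variable {X : Type u} [MetricSpace X] {n : ℕ} {Ψ : ℝ} {x y : ℕ → X} {k : ℕ}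

theorem selfSimDist_eq_of_firstDiff (hn : 1 < n) (hΨ : 0 < Ψ) (hpre : ∀ i < k, x i = y i)
    (hk : x k ≠ y k) :
    selfSimDist n (Real.log n / Real.log Ψ) x y = dist (x k) (y k) / Ψ ^ k := by
  have hne : x ≠ y := fun h => hk (congrFun h k)
  have hfind : Nat.find (Function.ne_iff.mp hne) = k :=
    (Nat.find_eq_iff _).2 ⟨hk, fun i hi => not_not.2 (hpre i hi)⟩
  rw [selfSimDist, dif_neg hne, hfind, natCast_rpow_div_log_div_log hn hΨ]

theorem selfSimDist_le_inv_pow (hX : ∀ a b : X, dist a b ≤ 1) (hn : 1 < n) (hΨ : 1 ≤ Ψ)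
    (hpre : ∀ i < k, x i = y i) :
    selfSimDist n (Real.log n / Real.log Ψ) x y ≤ (Ψ ^ k)⁻¹ := by
  have hΨ0 : 0 < Ψ := zero_lt_one.trans_le hΨ
  by_cases hxy : x = y
  · rw [selfSimDist, dif_pos hxy]
    positivity
  have hfirst : ∃ j, x j ≠ y j := Function.ne_iff.mp hxy
  set j := Nat.find hfirst
  have hkj : k ≤ j := not_lt.1 fun h => Nat.find_spec hfirst (hpre j h)
  rw [selfSimDist_eq_of_firstDiff hn hΨ0 (fun i hi => not_not.1 (Nat.find_min hfirst hi))
    (Nat.find_spec hfirst)]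
  calc dist (x j) (y j) / Ψ ^ j ≤ (Ψ ^ j)⁻¹ := by
        rw [div_eq_mul_inv]
        exact mul_le_of_le_one_left (by positivity) (hX _ _)
    _ ≤ (Ψ ^ k)⁻¹ := inv_anti₀ (by positivity) (pow_le_pow_right₀ hΨ hkj)

end SelfSimDist

section MetricProperty

variable (P : (Z : Type u) → (Z → Z → ℝ) → Prop)

def IsMetricProperty : Prop :=
  ∀ (Z W : Type u) (dZ : Z → Z → ℝ) (dW : W → W → ℝ) (f : Z ≃ W),
    (∀ a b, dW (f a) (f b) = dZ a b) → P Z dZ → P W dW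

def IsHereditary : Prop :=
  ∀ (Z : Type u) (dZ : Z → Z → ℝ) (S : Set Z), P Z dZ → P S (fun a b => dZ a b)

def IsDilationInvariant : Prop :=
  ∀ (Z : Type u) (dZ : Z → Z → ℝ) (lam : ℝ), 0 < lam → P Z dZ →
    P Z (fun a b => lam * dZ a b)

variable {P}

theorem IsMetricProperty.of_injective_dilation (hP_iso : IsMetricProperty P)
    (hP_her : IsHereditary P) (hP_dil : IsDilationInvariant P)
    {Z W : Type u} {dZ : Z → Z → ℝ} {dW : W → W → ℝ} (f : W → Z) (hf : Function.Injective f)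
    {lam : ℝ} (hlam : 0 < lam) (hdist : ∀ a b, dW a b = lam * dZ (f a) (f b)) (hZ : P Z dZ) :
    P W dW := by
  refine hP_iso _ _ _ dW (Equiv.ofInjective f hf).symm (fun a b => ?_)
    (hP_dil _ _ lam hlam (hP_her Z dZ (Set.range f) hZ))
  rw [hdist, Equiv.apply_ofInjective_symm hf, Equiv.apply_ofInjective_symm hf]

end MetricProperty

section Prefixes

variable {X : Type*} [Fintype X]

noncomputable def prefixes (Z : Set (ℕ → X)) (k : ℕ) : Finset (Fin k → X) :=
  {p | ∃ x ∈ Z, ∀ i : Fin k, x i = p i}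

noncomputable def nextCoords (Z : Set (ℕ → X)) {k : ℕ} (p : Fin k → X) : Finset X :=
  {c | ∃ x ∈ Z, (∀ i : Fin k, x i = p i) ∧ x k = c}

theorem card_prefixes_le {Z : Set (ℕ → X)} {m : ℕ}
    (hnext : ∀ (k : ℕ) (p : Fin k → X), #(nextCoords Z p) ≤ m) (k : ℕ) :
    #(prefixes Z k) ≤ m ^ k := by
  induction k with
  | zero => simpa using Finset.card_le_univ (prefixes Z 0)
  | succ k ih =>
    have hinit : ∀ q ∈ prefixes Z (k + 1), Fin.init q ∈ prefixes Z k := by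
      simp only [prefixes, Finset.mem_filter, Finset.mem_univ, true_and]
      rintro q ⟨x, hx, hxq⟩
      exact ⟨x, hx, fun i => hxq i.castSucc⟩
    have hfiber : ∀ p ∈ prefixes Z k, #{q ∈ prefixes Z (k + 1) | Fin.init q = p} ≤ m := by
      intro p _
      refine (Finset.card_le_card_of_injOn (· (Fin.last k)) ?_ ?_).trans (hnext k p)
      · simp only [prefixes, nextCoords, Finset.coe_filter, Finset.mem_filter, Finset.mem_univ,
          true_and, Set.MapsTo, Set.mem_ofPred_eq]
        rintro q ⟨⟨x, hx, hxq⟩, rfl⟩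
        exact ⟨x, hx, fun i => hxq i.castSucc, hxq (Fin.last k)⟩
      · intro q hq q' hq' hlast
        simp only [Finset.coe_filter, Set.mem_ofPred_eq] at hq hq'
        rw [← Fin.snoc_init_self q, ← Fin.snoc_init_self q', hq.2, hq'.2]
        exact congrArg _ hlast
    calc #(prefixes Z (k + 1)) ≤ m * #(prefixes Z k) :=
          Finset.card_le_mul_card_image_of_maps_to hinit m hfiber
      _ ≤ m ^ (k + 1) := by rw [pow_succ']; gcongr

end Prefixes

theorem card_nextCoords_image_le {X Y : Type u} [Fintype X] [MetricSpace X] [MetricSpace Y]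
    {n : ℕ} {Ψ : ℝ} (hn : 1 < n) (hΨ : 0 < Ψ) {e : Y → ℕ → X}
    (hdist : ∀ a b : Y, dist a b = selfSimDist n (Real.log n / Real.log Ψ) (e a) (e b))
    {P : (Z : Type u) → (Z → Z → ℝ) → Prop} (hP_iso : IsMetricProperty P)
    (hP_her : IsHereditary P) (hP_dil : IsDilationInvariant P) {m : ℕ}
    (hmax : ∀ S : Set X, P S (fun a b => dist (a : X) b) → S.ncard ≤ m)
    {Z : Set Y} (hZ : P Z (fun a b => dist (a : Y) b)) {k : ℕ} (p : Fin k → X) :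
    #(nextCoords (e '' Z) p) ≤ m := by
  have hwitness : ∀ c : (nextCoords (e '' Z) p : Set X),
      ∃ z : Z, (∀ i : Fin k, e z i = p i) ∧ e z k = c := by
    rintro ⟨c, hc⟩
    simp only [nextCoords, Finset.mem_coe, Finset.mem_filter, Finset.mem_univ, true_and,
      Set.exists_mem_image] at hc
    obtain ⟨z, hz, hzp, hzc⟩ := hc
    exact ⟨⟨z, hz⟩, hzp, hzc⟩
  choose w hwp hwk using hwitness
  have hw_inj : Function.Injective w := fun c c' h =>
    Subtype.ext <| by rw [← hwk c, ← hwk c', h]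
  have hw_dist : ∀ c c', dist c c' = Ψ ^ k * dist (w c) (w c') := by
    intro c c'
    rcases eq_or_ne c c' with rfl | hcc'
    · simp
    have hpre : ∀ i < k, e (w c) i = e (w c') i := fun i hi =>
      (hwp c ⟨i, hi⟩).trans (hwp c' ⟨i, hi⟩).symm
    have hk : e (w c) k ≠ e (w c') k := by
      rw [hwk, hwk]
      exact Subtype.coe_ne_coe.2 hcc'
    rw [Subtype.dist_eq, Subtype.dist_eq, hdist, selfSimDist_eq_of_firstDiff hn hΨ hpre hk,
      hwk, hwk, mul_div_cancel₀ _ (pow_pos hΨ k).ne']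
  simpa using hmax _ (hP_iso.of_injective_dilation hP_her hP_dil w hw_inj
    (pow_pos hΨ k) hw_dist hZ)

theorem stmt16_general {X : Type u} [Fintype X] [MetricSpace X]
    {Y : Type u} [MetricSpace Y]
    (n : ℕ) (hn2 : 2 ≤ n)
    (hdiam : Metric.diam (Set.univ : Set X) = 1)
    (δ : ℝ)
    (hδ_att : ∃ x y : X, x ≠ y ∧ dist x y = δ)
    (Ψ : ℝ) (hΨ : 1 / δ < Ψ)
    (α : ℝ) (hα : α = Real.log n / Real.log Ψ)
    (e : Y ≃ (ℕ → X))
    (hdist : ∀ a b : Y, dist a b = selfSimDist n α (e a) (e b))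
    (P : (Z : Type u) → (Z → Z → ℝ) → Prop)
    (hP_iso : ∀ (Z W : Type u) (dZ : Z → Z → ℝ) (dW : W → W → ℝ) (f : Z ≃ W),
      (∀ a b, dW (f a) (f b) = dZ a b) → P Z dZ → P W dW)
    (hP_her : ∀ (Z : Type u) (dZ : Z → Z → ℝ) (S : Set Z), P Z dZ →
      P S (fun a b => dZ a b))
    (hP_dil : ∀ (Z : Type u) (dZ : Z → Z → ℝ) (lam : ℝ), 0 < lam → P Z dZ →
      P Z (fun a b => lam * dZ a b))
    (m : ℕ)
    (hmax : ∀ S : Set X, P S (fun a b => dist (a : X) b) → S.ncard ≤ m) :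
    ∀ Z : Set Y, P Z (fun a b => dist (a : Y) b) →
      dimH Z ≤ ENNReal.ofReal (Real.log m / Real.log Ψ) := by
  intro Z hZ
  subst hα
  have hn : 1 < n := hn2
  have hX : ∀ a b : X, dist a b ≤ 1 := fun a b =>
    hdiam ▸ dist_le_diam_of_mem Set.finite_univ.isBounded (Set.mem_univ a) (Set.mem_univ b)
  have hΨ1 : 1 < Ψ := by
    obtain ⟨x, y, hxy, rfl⟩ := hδ_att
    exact (one_le_one_div (dist_pos.2 hxy) (hX x y)).trans_lt hΨ
  refine dimH_le_of_card_cover_le (ι := fun k => prefixes (e '' Z) k)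
    (t := fun k p => {y | ∀ i : Fin k, e y i = p.1 i}) hΨ1 (fun k => ?_) (fun k p => ?_)
    (fun k z hz => Set.mem_iUnion.2 ⟨⟨fun i => e z i, ?_⟩, fun i => rfl⟩)
  · rw [Fintype.card_coe]
    exact card_prefixes_le (fun _ => card_nextCoords_image_le hn (zero_lt_one.trans hΨ1) hdist
      hP_iso hP_her hP_dil hmax hZ) k
  · refine ediam_le fun a ha b hb => ?_
    rw [edist_dist, hdist]
    exact ENNReal.ofReal_le_ofReal <| selfSimDist_le_inv_pow hX hn hΨ1.le fun i hi =>
      (ha ⟨i, hi⟩).trans (hb ⟨i, hi⟩).symm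
  · simp only [prefixes, Finset.mem_filter, Finset.mem_univ, true_and]
    exact ⟨e z, Set.mem_image_of_mem e hz, fun i => rfl⟩

/-- Let `(Y,ρ)` be the self-similar space built from a fixed `n`-point
metric space `(X,d)` of diameter `1` and minimal distance `δ` with `Ψ·δ > 1`, and let `P`
be a hereditary, dilation-invariant metric property whose largest subset of `X` has
cardinality `m ∈ {1,…,n−1}`. Then every `Z ⊆ Y` with property `P` satisfies
`dim_H(Z,ρ) ≤ log_Ψ m`. -/
theorem stmt16 {X : Type u} [Fintype X] [MetricSpace X]
    {Y : Type u} [MetricSpace Y] [MeasurableSpace Y] [BorelSpace Y]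
    (n : ℕ) (hn : n = Fintype.card X) (hn2 : 2 ≤ n)
    (hdiam : Metric.diam (Set.univ : Set X) = 1)
    (δ : ℝ) (hδpos : 0 < δ)
    (hδ_min : ∀ x y : X, x ≠ y → δ ≤ dist x y)
    (hδ_att : ∃ x y : X, x ≠ y ∧ dist x y = δ)
    (Ψ : ℝ) (hΨ : 1 / δ < Ψ)
    (α : ℝ) (hα : α = Real.log n / Real.log Ψ)
    (e : Y ≃ (ℕ → X))
    (hdist : ∀ a b : Y, dist a b = selfSimDist n α (e a) (e b))
    (P : (Z : Type u) → (Z → Z → ℝ) → Prop)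
    (hP_iso : ∀ (Z W : Type u) (dZ : Z → Z → ℝ) (dW : W → W → ℝ) (f : Z ≃ W),
      (∀ a b, dW (f a) (f b) = dZ a b) → P Z dZ → P W dW)
    (hP_her : ∀ (Z : Type u) (dZ : Z → Z → ℝ) (S : Set Z), P Z dZ →
      P S (fun a b => dZ a b))
    (hP_dil : ∀ (Z : Type u) (dZ : Z → Z → ℝ) (lam : ℝ), 0 < lam → P Z dZ →
      P Z (fun a b => lam * dZ a b))
    (m : ℕ) (hm1 : 1 ≤ m) (hmn : m ≤ n - 1)
    (hmax : ∀ S : Set X, P S (fun a b => dist (a : X) b) → S.ncard ≤ m)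
    (hatt : ∃ S : Set X, P S (fun a b => dist (a : X) b) ∧ S.ncard = m) :
    ∀ Z : Set Y, P Z (fun a b => dist (a : Y) b) →
      dimH Z ≤ ENNReal.ofReal (Real.log m / Real.log Ψ) :=
  stmt16_general n hn2 hdiam δ hδ_att Ψ hΨ α hα e hdist P hP_iso hP_her hP_dil m hmax
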